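/- Let $R$ be a principal Artinian local ring of length $k$ and let $H$, $H'$ be finite $R$-modules such that $H \simeq R^{\epsilon}\oplus M\oplus M$ and $H' \simeq R^{\epsilon}\oplus M'\oplus M'$ for some $\epsilon\in\{0,1\}$ and cyclic quotient data as follows: suppose there is a module $H_0$ with injections $H_0\hookrightarrow H$ and $H_0\hookrightarrow H'$ whose cokernels are direct sums of two cyclic $R$-modules of lengths $(a,b)$ and $(k-a-\delta, k-b-\delta)$ respectively, for integers $a,b,\delta\ge 0$. Then $\mathrm{length}(M') = \mathrm{length}(M) + k - a - b - \delta$. -/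

import Mathlib

/-!
Length is additive along `0 → H₀ → H → H/H₀ → 0` and `0 → H₀ → H' → H'/H₀ → 0`, and
`ℓ(H) = εk + 2ℓ(M)`, `ℓ(H') = εk + 2ℓ(M')`; eliminating `ℓ(H₀)` gives the claim once
`ℓ(R/𝔪^c) = c` for `c ≤ k`. For the latter: `𝔪^c` is principal, so `𝔪^c/𝔪^(c+1)` is cyclic and
killed by `𝔪`, hence each step `R/𝔪^(c+1) ↠ R/𝔪^c` adds at most one to the length; by Nakayama it
adds nothing only if `𝔪^c = 0`, i.e. once the length of `R` has been reached.
-/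

/-- `moduleLengthIs R M n` says that `M` has a composition series of length `n` as an
`R`-module, i.e. `M` has length `n`. -/
def moduleLengthIs (R M : Type*) [Ring R] [AddCommGroup M] [Module R M] (n : ℕ) : Prop :=
  ∃ s : CompositionSeries (Submodule R M), s.head = ⊥ ∧ s.last = ⊤ ∧ s.length = n

open IsLocalRing Module

theorem moduleLengthIs.length_eq {R M : Type*} [Ring R] [AddCommGroup M] [Module R M] {n : ℕ}
    (h : moduleLengthIs R M n) : length R M = n := by
  obtain ⟨s, hs₁, hs₂, rfl⟩ := h
  exact (length_compositionSeries s hs₁ hs₂).symm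

theorem LinearMap.length_eq_add_length_quotient_range {R M N : Type*} [Ring R]
    [AddCommGroup M] [Module R M] [AddCommGroup N] [Module R N] {f : M →ₗ[R] N}
    (hf : Function.Injective f) :
    length R N = length R M + length R (N ⧸ LinearMap.range f) :=
  length_eq_add_of_exact f _ hf (Submodule.mkQ_surjective _) (LinearMap.exact_map_mkQ_range f)

theorem Submodule.length_quotient_eq_length_map_mkQ_add {R M : Type*} [Ring R] [AddCommGroup M]
    [Module R M] {S T : Submodule R M} (hST : S ≤ T) :
    length R (M ⧸ S) = length R (T.map S.mkQ) + length R (M ⧸ T) := by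
  rw [length_eq_add_of_exact (T.map S.mkQ).subtype (T.map S.mkQ).mkQ
    (Submodule.injective_subtype _) (Submodule.mkQ_surjective _)
    (LinearMap.exact_subtype_mkQ _), (Submodule.quotientQuotientEquivQuotient S T hST).length_eq]

section LocalRing

variable {R : Type*} [CommRing R] [IsLocalRing R]

theorem length_span_singleton_le_one_of_maximalIdeal_smul {M : Type*} [AddCommGroup M]
    [Module R M] {y : M} (hy : ∀ r ∈ maximalIdeal R, r • y = 0) :
    length R (R ∙ y) ≤ 1 := by
  let ψ := (LinearMap.toSpanSingleton R M y).rangeRestrict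
  let φ : R ⧸ maximalIdeal R →ₗ[R] LinearMap.range (LinearMap.toSpanSingleton R M y) :=
    (maximalIdeal R).liftQ ψ fun r hr => by simpa [ψ, Subtype.ext_iff] using hy r hr
  have hφ : Function.Surjective φ := by
    intro z
    obtain ⟨r, hr⟩ := LinearMap.surjective_rangeRestrict _ z
    exact ⟨Ideal.Quotient.mk _ r, hr⟩
  have : IsSimpleModule R (R ⧸ maximalIdeal R) :=
    isSimpleModule_iff_isCoatom.mpr (maximalIdeal.isMaximal R).out
  rw [LinearMap.span_singleton_eq_range]
  simpa using length_le_of_surjective φ hφ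

variable [IsPrincipalIdealRing R]

theorem length_map_mkQ_pow_maximalIdeal_le_one (a : ℕ) :
    length R (Submodule.map (maximalIdeal R ^ (a + 1)).mkQ (maximalIdeal R ^ a)) ≤ 1 := by
  obtain ⟨x, hx⟩ := (IsPrincipalIdealRing.principal (maximalIdeal R ^ a)).principal
  rw [hx, Submodule.map_span, Set.image_singleton]
  refine length_span_singleton_le_one_of_maximalIdeal_smul fun r hr => ?_
  rw [← map_smul, Submodule.mkQ_apply, Submodule.Quotient.mk_eq_zero, pow_succ']
  exact Ideal.mul_mem_mul hr (hx ▸ Submodule.mem_span_singleton_self x)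

theorem maximalIdeal_pow_eq_bot_of_length_map_mkQ_eq_zero {a : ℕ}
    (h : length R (Submodule.map (maximalIdeal R ^ (a + 1)).mkQ (maximalIdeal R ^ a)) = 0) :
    maximalIdeal R ^ a = ⊥ := by
  rw [length_eq_zero_iff, Submodule.subsingleton_iff_eq_bot, ← LinearMap.le_ker_iff_map,
    Submodule.ker_mkQ, pow_succ', ← smul_eq_mul] at h
  exact Submodule.eq_bot_of_le_smul_of_le_jacobson_bot _ _
    (IsPrincipalIdealRing.principal _).fg h (jacobson_eq_maximalIdeal ⊥ bot_ne_top).ge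

theorem length_quotient_pow_maximalIdeal {k : ℕ} (hk : length R R = k) {a : ℕ} (ha : a ≤ k) :
    length R (R ⧸ maximalIdeal R ^ a) = a := by
  induction a with
  | zero => simp [Ideal.one_eq_top]
  | succ a ih =>
    rw [Submodule.length_quotient_eq_length_map_mkQ_add (Ideal.pow_le_pow_right a.le_succ),
      ih (by omega), add_comm]
    rcases (length_map_mkQ_pow_maximalIdeal_le_one (R := R) a).lt_or_eq with h | h
    · have hbot := maximalIdeal_pow_eq_bot_of_length_map_mkQ_eq_zero (Order.lt_one_iff.mp h)
      have : (a : ℕ∞) = k := by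
        rw [← ih (by omega), ← hk, hbot, (Submodule.quotEquivOfEqBot _ rfl).length_eq]
      norm_cast at this
      omega
    · rw [h]
      norm_cast

end LocalRing

theorem stmt0_general (R : Type*) [CommRing R] [IsLocalRing R]
    [IsPrincipalIdealRing R] (k : ℕ) (hk : moduleLengthIs R R k)
    (M M' H H' H₀ : Type*)
    [AddCommGroup M] [Module R M]
    [AddCommGroup M'] [Module R M']
    [AddCommGroup H] [Module R H]
    [AddCommGroup H'] [Module R H']
    [AddCommGroup H₀] [Module R H₀]
    (ε : ℕ)
    (eH : Nonempty (H ≃ₗ[R] (Fin ε → R) × M × M))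
    (eH' : Nonempty (H' ≃ₗ[R] (Fin ε → R) × M' × M'))
    (a b δ : ℕ) (haδ : a + δ ≤ k) (hbδ : b + δ ≤ k)
    (f : H₀ →ₗ[R] H) (hf : Function.Injective f)
    (g : H₀ →ₗ[R] H') (hg : Function.Injective g)
    (hcokf : Nonempty ((H ⧸ LinearMap.range f) ≃ₗ[R]
      ((R ⧸ (IsLocalRing.maximalIdeal R ^ a : Ideal R)) ×
        (R ⧸ (IsLocalRing.maximalIdeal R ^ b : Ideal R)))))
    (hcokg : Nonempty ((H' ⧸ LinearMap.range g) ≃ₗ[R]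
      ((R ⧸ (IsLocalRing.maximalIdeal R ^ (k - a - δ) : Ideal R)) ×
        (R ⧸ (IsLocalRing.maximalIdeal R ^ (k - b - δ) : Ideal R)))))
    (lM lM' : ℕ) (hlM : moduleLengthIs R M lM) (hlM' : moduleLengthIs R M' lM') :
    lM' + a + b + δ = lM + k := by
  have hR := hk.length_eq
  have hq {c : ℕ} (hc : c ≤ k) := length_quotient_pow_maximalIdeal hR hc
  have hH : length R H = ε * k + (lM + lM) := by
    simp [eH.some.length_eq, hR, hlM.length_eq]
  have hH' : length R H' = ε * k + (lM' + lM') := by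
    simp [eH'.some.length_eq, hR, hlM'.length_eq]
  have hH₀H : length R H = length R H₀ + (a + b) := by
    rw [LinearMap.length_eq_add_length_quotient_range hf, hcokf.some.length_eq, length_prod,
      hq (by omega), hq (by omega)]
  have hH₀H' : length R H' = length R H₀ + ((k - a - δ + (k - b - δ) : ℕ) : ℕ∞) := by
    rw [LinearMap.length_eq_add_length_quotient_range hg, hcokg.some.length_eq, length_prod,
      hq (by omega), hq (by omega), Nat.cast_add]
  obtain ⟨n, hn⟩ := ENat.ne_top_iff_exists.mp fun htop : length R H₀ = ⊤ => by
    rw [hH, htop, top_add] at hH₀H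
    exact ENat.natCast_ne_top _ (by exact_mod_cast hH₀H)
  rw [hH, ← hn] at hH₀H
  rw [hH', ← hn] at hH₀H'
  norm_cast at hH₀H hH₀H'
  omega

/-- Let `R` be a principal Artinian local ring of length `k`, and `H, H'` finite
`R`-modules with `H ≃ R^ε ⊕ M ⊕ M`, `H' ≃ R^ε ⊕ M' ⊕ M'` for some `ε ∈ {0,1}`. Suppose there
is a module `H₀` with injections into `H` and `H'` whose cokernels are direct sums of two
cyclic modules of lengths `(a, b)` and `(k-a-δ, k-b-δ)` respectively. Then
`length M' = length M + k - a - b - δ`. -/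
theorem stmt0 (R : Type*) [CommRing R] [IsArtinianRing R] [IsLocalRing R]
    [IsPrincipalIdealRing R] (k : ℕ) (hk : moduleLengthIs R R k)
    (M M' H H' H₀ : Type*)
    [AddCommGroup M] [Module R M] [Module.Finite R M]
    [AddCommGroup M'] [Module R M'] [Module.Finite R M']
    [AddCommGroup H] [Module R H] [Module.Finite R H]
    [AddCommGroup H'] [Module R H'] [Module.Finite R H']
    [AddCommGroup H₀] [Module R H₀] [Module.Finite R H₀]
    (ε : ℕ) (hε : ε ≤ 1)
    (eH : Nonempty (H ≃ₗ[R] (Fin ε → R) × M × M))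
    (eH' : Nonempty (H' ≃ₗ[R] (Fin ε → R) × M' × M'))
    (a b δ : ℕ) (haδ : a + δ ≤ k) (hbδ : b + δ ≤ k)
    (f : H₀ →ₗ[R] H) (hf : Function.Injective f)
    (g : H₀ →ₗ[R] H') (hg : Function.Injective g)
    (hcokf : Nonempty ((H ⧸ LinearMap.range f) ≃ₗ[R]
      ((R ⧸ (IsLocalRing.maximalIdeal R ^ a : Ideal R)) ×
        (R ⧸ (IsLocalRing.maximalIdeal R ^ b : Ideal R)))))
    (hcokg : Nonempty ((H' ⧸ LinearMap.range g) ≃ₗ[R]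
      ((R ⧸ (IsLocalRing.maximalIdeal R ^ (k - a - δ) : Ideal R)) ×
        (R ⧸ (IsLocalRing.maximalIdeal R ^ (k - b - δ) : Ideal R)))))
    (lM lM' : ℕ) (hlM : moduleLengthIs R M lM) (hlM' : moduleLengthIs R M' lM') :
    lM' + a + b + δ = lM + k :=
  stmt0_general R k hk M M' H H' H₀ ε eH eH' a b δ haδ hbδ f hf g hg hcokf hcokg lM lM' hlM hlM'
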